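/- Let $c$ be a positive integer with $n$-th Macaulay decomposition $c = \binom{k_n}{n} + \cdots + \binom{k_\delta}{\delta}$. If $k_\delta > \delta$, then $(c-1)_{<n>} < c_{<n>}$, where $c_{<n>} = \binom{k_n-1}{n} + \cdots + \binom{k_\delta-1}{\delta}$. -/
import Mathlib

/-- The `n`-th Macaulay decomposition of a positive integer `c`:
`c = C(k n, n) + ⋯ + C(k δ, δ)` with `k n > ⋯ > k δ ≥ δ > 0`. -/
def IsMacaulayDecomp (n c δ : ℕ) (k : ℕ → ℕ) : Prop :=
  0 < δ ∧ δ ≤ n ∧ δ ≤ k δ ∧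
  (∀ i, δ ≤ i → i < n → k i < k (i + 1)) ∧
  c = ∑ i ∈ Finset.Icc δ n, (k i).choose i

/-- `c_{<n>} = C(k n - 1, n) + ⋯ + C(k δ - 1, δ)`. -/
def macaulayLower (n δ : ℕ) (k : ℕ → ℕ) : ℕ :=
  ∑ i ∈ Finset.Icc δ n, (k i - 1).choose i

private lemma mac_sum_split (f : ℕ → ℕ) (a b c : ℕ) (h1 : a ≤ b + 1) (h2 : b ≤ c) :
    ∑ i ∈ Finset.Icc a c, f i =
      ∑ i ∈ Finset.Icc a b, f i + ∑ i ∈ Finset.Icc (b + 1) c, f i := by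
  simp only [← Finset.Ico_add_one_right_eq_Icc]
  exact (Finset.sum_Ico_consecutive f h1 (by omega)).symm

private lemma mac_sum_lt (δ : ℕ) (k : ℕ → ℕ) (hδ : 0 < δ) (hkδ : δ ≤ k δ) :
    ∀ m, δ ≤ m → (∀ i, δ ≤ i → i < m → k i < k (i + 1)) →
      ∑ i ∈ Finset.Icc δ m, (k i).choose i < (k m + 1).choose m := by
  intro m hm
  induction m, hm using Nat.le_induction with
  | base =>
    intro _
    rw [Finset.Icc_self, Finset.sum_singleton]
    obtain ⟨d, hd⟩ : ∃ d, δ = d + 1 := ⟨δ - 1, by omega⟩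
    subst hd
    have h4 : (k (d + 1) + 1).choose (d + 1) =
        (k (d + 1)).choose d + (k (d + 1)).choose (d + 1) :=
      Nat.choose_succ_succ (k (d + 1)) d
    have : 0 < (k (d + 1)).choose d := Nat.choose_pos (by omega)
    omega
  | succ m hm ih =>
    intro hmono
    rw [Finset.sum_Icc_succ_top (by omega)]
    have h1 := ih (fun i hi hin => hmono i hi (by omega))
    have h2 : k m + 1 ≤ k (m + 1) := hmono m hm (by omega)
    have h3 : (k m + 1).choose m ≤ (k (m + 1)).choose m := Nat.choose_le_choose m h2
    have h4 : (k (m + 1) + 1).choose (m + 1) =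
        (k (m + 1)).choose m + (k (m + 1)).choose (m + 1) :=
      Nat.choose_succ_succ (k (m + 1)) m
    omega

private lemma mac_top_le {n c δ₁ δ₂ : ℕ} {k₁ k₂ : ℕ → ℕ}
    (h₁ : IsMacaulayDecomp n c δ₁ k₁) (h₂ : IsMacaulayDecomp n c δ₂ k₂) :
    k₁ n ≤ k₂ n := by
  by_contra hlt
  push_neg at hlt
  obtain ⟨p1, p2, p3, p4, p5⟩ := h₁
  obtain ⟨q1, q2, q3, q4, q5⟩ := h₂
  have h1 : c < (k₂ n + 1).choose n := q5 ▸ mac_sum_lt δ₂ k₂ q1 q3 n q2 q4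
  have h2 : (k₂ n + 1).choose n ≤ (k₁ n).choose n := Nat.choose_le_choose n hlt
  have h3 : (k₁ n).choose n ≤ c := by
    rw [p5]
    exact Finset.single_le_sum (f := fun i => (k₁ i).choose i)
      (fun i _ => Nat.zero_le _) (Finset.mem_Icc.mpr ⟨p2, le_refl n⟩)
  omega

private lemma mac_uniq : ∀ n c δ δ' : ℕ, ∀ k k' : ℕ → ℕ,
    IsMacaulayDecomp n c δ k → IsMacaulayDecomp n c δ' k' →
    δ = δ' ∧ ∀ i, δ ≤ i → i ≤ n → k i = k' i := by
  intro n
  induction n with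
  | zero =>
    intro c δ δ' k k' h _
    have h1 := h.1
    have h2 := h.2.1
    omega
  | succ n ih =>
    intro c δ δ' k k' h h'
    have kk : k (n + 1) = k' (n + 1) := le_antisymm (mac_top_le h h') (mac_top_le h' h)
    have kkc : (k (n + 1)).choose (n + 1) = (k' (n + 1)).choose (n + 1) := by rw [kk]
    obtain ⟨p1, p2, p3, p4, p5⟩ := h
    obtain ⟨q1, q2, q3, q4, q5⟩ := h'
    by_cases hδ1 : δ = n + 1 <;> by_cases hδ2 : δ' = n + 1
    · subst hδ1; subst hδ2
      refine ⟨rfl, fun i h1 h2 => ?_⟩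
      have : i = n + 1 := by omega
      subst this; exact kk
    · exfalso
      subst hδ1
      rw [Finset.Icc_self, Finset.sum_singleton] at p5
      rw [Finset.sum_Icc_succ_top (by omega)] at q5
      have hpos : 0 < (k' δ').choose δ' := Nat.choose_pos q3
      have hle : (k' δ').choose δ' ≤ ∑ i ∈ Finset.Icc δ' n, (k' i).choose i :=
        Finset.single_le_sum (f := fun i => (k' i).choose i)
          (fun i _ => Nat.zero_le _) (Finset.mem_Icc.mpr ⟨le_refl δ', by omega⟩)
      omega
    · exfalso
      subst hδ2
      rw [Finset.Icc_self, Finset.sum_singleton] at q5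
      rw [Finset.sum_Icc_succ_top (by omega)] at p5
      have hpos : 0 < (k δ).choose δ := Nat.choose_pos p3
      have hle : (k δ).choose δ ≤ ∑ i ∈ Finset.Icc δ n, (k i).choose i :=
        Finset.single_le_sum (f := fun i => (k i).choose i)
          (fun i _ => Nat.zero_le _) (Finset.mem_Icc.mpr ⟨le_refl δ, by omega⟩)
      omega
    · rw [Finset.sum_Icc_succ_top (by omega)] at p5
      rw [Finset.sum_Icc_succ_top (by omega)] at q5
      have hh1 : IsMacaulayDecomp n (∑ i ∈ Finset.Icc δ n, (k i).choose i) δ k :=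
        ⟨p1, by omega, p3, fun i hi hin => p4 i hi (by omega), rfl⟩
      have heq : ∑ i ∈ Finset.Icc δ' n, (k' i).choose i =
          ∑ i ∈ Finset.Icc δ n, (k i).choose i := by omega
      have hh2 : IsMacaulayDecomp n (∑ i ∈ Finset.Icc δ n, (k i).choose i) δ' k' :=
        ⟨q1, by omega, q3, fun i hi hin => q4 i hi (by omega), heq.symm⟩
      obtain ⟨eδ, hkeq⟩ := ih _ δ δ' k k' hh1 hh2
      refine ⟨eδ, fun i h1 h2 => ?_⟩
      by_cases hi : i ≤ n
      · exact hkeq i h1 hi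
      · have : i = n + 1 := by omega
        subst this; exact kk

private lemma mac_hockey (a δ : ℕ) :
    1 + ∑ j ∈ Finset.Icc 1 δ, (a + j).choose j = (a + δ + 1).choose δ := by
  induction δ with
  | zero => simp
  | succ d ihd =>
    rw [Finset.sum_Icc_succ_top (by omega)]
    have h1 : (a + (d + 1) + 1).choose (d + 1) =
        (a + d + 1).choose d + (a + d + 1).choose (d + 1) := by
      have : a + (d + 1) + 1 = (a + d + 1) + 1 := by omega
      rw [this]
      exact Nat.choose_succ_succ (a + d + 1) d
    have h2 : a + (d + 1) = a + d + 1 := by omega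
    rw [h1, h2]
    omega

/-- If `k δ > δ` in the `n`-th Macaulay decomposition of `c`,
then `(c-1)_{<n>} < c_{<n>}`: the map `c ↦ c_{<n>}` is increasing there. -/
theorem macaulayLower_strict (n c δ δ' : ℕ) (k k' : ℕ → ℕ)
    (h : IsMacaulayDecomp n c δ k) (h' : IsMacaulayDecomp n (c - 1) δ' k')
    (hk : δ < k δ) :
    macaulayLower n δ' k' < macaulayLower n δ k := by
  obtain ⟨p1, p2, p3, p4, p5⟩ := h
  have hn : 1 ≤ n := le_trans p1 p2
  obtain ⟨a, ha⟩ : ∃ a, k δ = a + δ + 1 := ⟨k δ - δ - 1, by omega⟩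
  set K : ℕ → ℕ := fun i => if δ < i then k i else a + i with hK
  have hsplitc : c = (a + δ + 1).choose δ + ∑ i ∈ Finset.Icc (δ + 1) n, (k i).choose i := by
    rw [p5, mac_sum_split (fun i => (k i).choose i) δ δ n (by omega) p2,
      Finset.Icc_self, Finset.sum_singleton, ha]
  have hKsum : ∑ i ∈ Finset.Icc 1 n, (K i).choose i =
      ∑ j ∈ Finset.Icc 1 δ, (a + j).choose j +
        ∑ i ∈ Finset.Icc (δ + 1) n, (k i).choose i := by
    rw [mac_sum_split (fun i => (K i).choose i) 1 δ n (by omega) p2]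
    congr 1
    · refine Finset.sum_congr rfl fun j hj => ?_
      rw [Finset.mem_Icc] at hj
      simp only [hK]
      rw [if_neg (by omega)]
    · refine Finset.sum_congr rfl fun i hi => ?_
      rw [Finset.mem_Icc] at hi
      simp only [hK]
      rw [if_pos (by omega)]
  have hh := mac_hockey a δ
  have hKdecomp : IsMacaulayDecomp n (c - 1) 1 K := by
    refine ⟨one_pos, hn, ?_, ?_, ?_⟩
    · show 1 ≤ K 1
      simp only [hK]
      rw [if_neg (by omega)]
      omega
    · intro i hi hin
      by_cases h1 : i < δ
      · have e1 : K i = a + i := if_neg (by omega)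
        have e2 : K (i + 1) = a + (i + 1) := if_neg (by omega)
        rw [e1, e2]; omega
      · by_cases h2 : i = δ
        · rw [h2]
          have e1 : K δ = a + δ := if_neg (by omega)
          have e2 : K (δ + 1) = k (δ + 1) := if_pos (by omega)
          have h3 := p4 δ (le_refl δ) (by omega)
          rw [e1, e2]; omega
        · have e1 : K i = k i := if_pos (by omega)
          have e2 : K (i + 1) = k (i + 1) := if_pos (by omega)
          rw [e1, e2]
          exact p4 i (by omega) hin
    · rw [hKsum]; omega
  obtain ⟨hδ'1, hkeq⟩ := mac_uniq n (c - 1) δ' 1 k' K h' hKdecomp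
  unfold macaulayLower
  subst hδ'1
  have e1 : ∑ i ∈ Finset.Icc 1 n, (k' i - 1).choose i =
      ∑ i ∈ Finset.Icc 1 n, (K i - 1).choose i := by
    refine Finset.sum_congr rfl fun i hi => ?_
    rw [Finset.mem_Icc] at hi
    rw [hkeq i hi.1 hi.2]
  rw [e1]
  have eK : ∑ i ∈ Finset.Icc 1 n, (K i - 1).choose i =
      ∑ j ∈ Finset.Icc 1 δ, (a + j - 1).choose j +
        ∑ i ∈ Finset.Icc (δ + 1) n, (k i - 1).choose i := by
    rw [mac_sum_split (fun i => (K i - 1).choose i) 1 δ n (by omega) p2]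
    congr 1
    · refine Finset.sum_congr rfl fun j hj => ?_
      rw [Finset.mem_Icc] at hj
      simp only [hK]
      rw [if_neg (by omega)]
    · refine Finset.sum_congr rfl fun i hi => ?_
      rw [Finset.mem_Icc] at hi
      simp only [hK]
      rw [if_pos (by omega)]
  have ek : ∑ i ∈ Finset.Icc δ n, (k i - 1).choose i =
      (k δ - 1).choose δ + ∑ i ∈ Finset.Icc (δ + 1) n, (k i - 1).choose i := by
    rw [mac_sum_split (fun i => (k i - 1).choose i) δ δ n (by omega) p2,
      Finset.Icc_self, Finset.sum_singleton]
  rw [eK, ek]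
  have key : ∑ j ∈ Finset.Icc 1 δ, (a + j - 1).choose j < (k δ - 1).choose δ := by
    have hkd1 : k δ - 1 = a + δ := by omega
    rw [hkd1]
    rcases Nat.eq_zero_or_pos a with h0 | hpos
    · subst h0
      rw [Finset.sum_eq_zero fun j hj => by
        rw [Finset.mem_Icc] at hj
        exact Nat.choose_eq_zero_of_lt (by omega)]
      simp [Nat.choose_pos (le_refl δ)]
    · obtain ⟨b, hb⟩ : ∃ b, a = b + 1 := ⟨a - 1, by omega⟩
      have hh2 := mac_hockey b δ
      have e2 : ∑ j ∈ Finset.Icc 1 δ, (a + j - 1).choose j =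
          ∑ j ∈ Finset.Icc 1 δ, (b + j).choose j := by
        refine Finset.sum_congr rfl fun j hj => ?_
        congr 1
        omega
      have e3 : a + δ = b + δ + 1 := by omega
      rw [e2, e3]
      omega
  omega
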